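/- Let β ≥ 1 be an integer, let K₀(x) = exp(−1/(1−x²))·1{−1 < x < 1} and K(x) = K₀(4x+1) − K₀(4x−1). Let n be a positive integer, Δ⃗ = (Δ_1,…,Δ_n) a nonincreasing sequence of nonnegative reals with Δ_n = 0, let r* ∈ [n] satisfy Δ_{n−r*+1} ≤ (1/r*)^{β/(2β+1)}, let m = (r*)^{1/(2β+1)} (assumed a positive integer), and let x_j = (2j−1)/(2m) for j ∈ [m]. For w ∈ {0,1}^m define densities on [0,1] by P_{w,i}(x) = 1{0 ≤ x ≤ 1} for i < n−r*+1 and P_{w,i}(x) = 1{0 ≤ x ≤ 1} + ∑_{j=1}^m w_j·((Δ_{n−r*+1} − Δ_i)/m^β)·K(m(x − x_j)) for i ≥ n−r*+1. Then for any w, w′ ∈ {0,1}^m, the L₂ distance between the final densities satisfies ‖P_{w,n} − P_{w′,n}‖ = √(h(w,w′)) · ‖K‖ · Δ_{n−r*+1} / m^{β+1/2}, where ‖K‖ = (∫K²(x) dx)^{1/2} and h(w,w′) is the Hamming distance. -/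

import Mathlib

/-! The bumps `K(m(x − x_j))` have pairwise disjoint supports, since `K` vanishes outside
`(−1/2, 1/2)` and the centres `x_j` are `1/m` apart. As `Δ_n = 0`, the difference
`P_{w,n} − P_{w′,n}` is `∑_j (w_j − w′_j)·(Δ_{n−r*+1}/m^β)·K(m(x − x_j))`, so its square is the
sum of the squares of the terms. Each bump has squared norm `‖K‖²/m` by a change of variables,
and `(w_j − w′_j)²` is `1` exactly where `w` and `w′` differ. -/

open MeasureTheory Finset

/-- The bump function `K₀(x) = exp(−1/(1−x²))·1{−1 < x < 1}`. -/
noncomputable def K₀ (x : ℝ) : ℝ :=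
  if -1 < x ∧ x < 1 then Real.exp (-(1 / (1 - x ^ 2))) else 0

/-- The function `K(x) = K₀(4x+1) − K₀(4x−1)` used in the smooth lower-bound construction. -/
noncomputable def Kfun (x : ℝ) : ℝ :=
  K₀ (4 * x + 1) - K₀ (4 * x - 1)

/-- The smooth lower-bound construction: for `w ∈ {0,1}^m`, the `i`-th density (1-based) on
`[0,1]` is the uniform density for `i < n−r*+1`, and
`1 + ∑_j w_j·((Δ_{n−r*+1} − Δ_i)/m^β)·K(m(x − x_j))` for `i ≥ n−r*+1`, where
`x_j = (2j−1)/(2m)` (here `j = jv.val + 1` for `jv : Fin m`). -/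
noncomputable def smoothLbP (n rs m β : ℕ) (Δ : ℕ → ℝ) (w : Fin m → Bool) (i : ℕ)
    (x : ℝ) : ℝ :=
  (if 0 ≤ x ∧ x ≤ 1 then 1 else 0) +
    (if n - rs + 1 ≤ i then
      ∑ j : Fin m, (if w j then (1 : ℝ) else 0) * ((Δ (n - rs + 1) - Δ i) / (m : ℝ) ^ β) *
        Kfun ((m : ℝ) * (x - (2 * (j : ℕ) + 1) / (2 * (m : ℝ))))
    else 0)

lemma K₀_nonneg (x : ℝ) : 0 ≤ K₀ x := by
  unfold K₀; split <;> positivity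

lemma K₀_le_one (x : ℝ) : K₀ x ≤ 1 := by
  unfold K₀
  split_ifs with h
  · have : 0 < 1 - x ^ 2 := by nlinarith [h.1, h.2]
    exact Real.exp_le_one_iff.2 (neg_nonpos.2 (by positivity))
  · exact zero_le_one

lemma K₀_eq_zero_of_one_le_abs {x : ℝ} (h : 1 ≤ |x|) : K₀ x = 0 := by
  unfold K₀
  rw [if_neg]
  rintro ⟨h1, h2⟩
  rcases le_abs.mp h with h' | h' <;> linarith

lemma Kfun_eq_zero_of_half_le_abs {x : ℝ} (h : 1 / 2 ≤ |x|) : Kfun x = 0 := by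
  unfold Kfun
  rw [K₀_eq_zero_of_one_le_abs, K₀_eq_zero_of_one_le_abs, sub_zero] <;>
    rcases le_abs.mp h with h' | h' <;> rw [le_abs] <;>
    first | (left; linarith) | (right; linarith)

lemma abs_Kfun_le_one (x : ℝ) : |Kfun x| ≤ 1 := by
  unfold Kfun
  rw [abs_le]
  constructor <;>
    linarith [K₀_nonneg (4 * x + 1), K₀_nonneg (4 * x - 1), K₀_le_one (4 * x + 1),
      K₀_le_one (4 * x - 1)]

lemma Kfun_mul_Kfun_eq_zero {a b : ℝ} (h : 1 ≤ |a - b|) : Kfun a * Kfun b = 0 := by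
  by_cases ha : 1 / 2 ≤ |a|
  · rw [Kfun_eq_zero_of_half_le_abs ha, zero_mul]
  · have hb : 1 / 2 ≤ |b| := by linarith [abs_sub a b]
    rw [Kfun_eq_zero_of_half_le_abs hb, mul_zero]

lemma measurable_K₀ : Measurable K₀ :=
  Measurable.ite ((measurableSet_lt measurable_const measurable_id).inter
    (measurableSet_lt measurable_id measurable_const)) (by fun_prop) measurable_const

lemma measurable_Kfun : Measurable Kfun :=
  (measurable_K₀.comp (by fun_prop)).sub (measurable_K₀.comp (by fun_prop))

lemma integrable_Kfun_sq : Integrable (fun x => Kfun x ^ 2) := by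
  have hsupp : Function.support (fun x => Kfun x ^ 2) ⊆ Set.Icc (-1 / 2) (1 / 2) := by
    intro x hx
    by_contra hx'
    refine hx (show Kfun x ^ 2 = 0 from ?_)
    rw [Kfun_eq_zero_of_half_le_abs, zero_pow two_ne_zero]
    rw [Set.mem_Icc, not_and_or, not_le, not_le] at hx'
    rcases hx' with h | h <;> rw [le_abs] <;> [right; left] <;> linarith
  refine (integrableOn_iff_integrable_of_support_subset hsupp).1 ?_
  refine Measure.integrableOn_of_bounded (M := 1) (by simp [Real.volume_Icc])
    (measurable_Kfun.pow_const 2).aestronglyMeasurable (Filter.Eventually.of_forall fun x => ?_)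
  rw [norm_pow, Real.norm_eq_abs]
  exact pow_le_one₀ (abs_nonneg _) (abs_Kfun_le_one x)

lemma integral_Kfun_sq_comp (a c : ℝ) :
    ∫ x, Kfun (a * (x - c)) ^ 2 = |a|⁻¹ * ∫ x, Kfun x ^ 2 := by
  rw [integral_sub_right_eq_self (fun y => Kfun (a * y) ^ 2) c,
    Measure.integral_comp_mul_left (fun y => Kfun y ^ 2) a, abs_inv, smul_eq_mul]

lemma sq_sum_eq_sum_sq_of_mul_eq_zero {ι R : Type*} [CommSemiring R] (s : Finset ι)
    (f : ι → R) (h : ∀ i ∈ s, ∀ j ∈ s, i ≠ j → f i * f j = 0) :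
    (∑ i ∈ s, f i) ^ 2 = ∑ i ∈ s, f i ^ 2 := by
  rw [sq, Finset.sum_mul_sum]
  refine Finset.sum_congr rfl fun i hi => ?_
  rw [Finset.sum_eq_single_of_mem i hi fun j hj hji => h i hi j hj hji.symm, sq]

lemma sum_sq_boolIndicator_sub_eq_hammingDist {ι : Type*} [Fintype ι] (v v' : ι → Bool) :
    ∑ i, ((if v i then (1 : ℝ) else 0) - (if v' i then 1 else 0)) ^ 2 =
      (hammingDist v v' : ℝ) := by
  rw [hammingDist, Finset.card_filter, Nat.cast_sum]
  refine Finset.sum_congr rfl fun i _ => ?_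
  cases v i <;> cases v' i <;> norm_num

/-- `bump m j x = K(m(x − x_{j+1}))`: the index `j : Fin m` is `0`-based. -/
noncomputable def bump (m : ℕ) (j : Fin m) (x : ℝ) : ℝ :=
  Kfun ((m : ℝ) * (x - (2 * (j : ℕ) + 1) / (2 * (m : ℝ))))

lemma bump_mul_bump_eq_zero {m : ℕ} {j k : Fin m} (hjk : j ≠ k) (x : ℝ) :
    bump m j x * bump m k x = 0 := by
  have hm : (m : ℝ) ≠ 0 := by exact_mod_cast j.pos.ne'
  apply Kfun_mul_Kfun_eq_zero
  have hsub : (m : ℝ) * (x - (2 * (j : ℕ) + 1) / (2 * (m : ℝ))) -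
      (m : ℝ) * (x - (2 * (k : ℕ) + 1) / (2 * (m : ℝ))) = (k : ℕ) - (j : ℕ) := by
    field_simp
    ring
  rw [hsub]
  have hkj : ((k : ℕ) : ℤ) - (j : ℕ) ≠ 0 :=
    sub_ne_zero.2 (by exact_mod_cast Fin.val_ne_of_ne hjk.symm)
  exact_mod_cast Int.one_le_abs hkj

lemma integrable_bump_sq {m : ℕ} (j : Fin m) : Integrable (fun x => bump m j x ^ 2) :=
  (integrable_Kfun_sq.comp_mul_left' (by exact_mod_cast j.pos.ne')).comp_sub_right _

lemma integral_bump_sq (m : ℕ) (j : Fin m) :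
    ∫ x, bump m j x ^ 2 = (m : ℝ)⁻¹ * ∫ x, Kfun x ^ 2 := by
  simp only [bump]
  rw [integral_Kfun_sq_comp, Nat.abs_cast]

lemma integral_sq_sum_bump (m : ℕ) (c : Fin m → ℝ) :
    ∫ x, (∑ j, c j * bump m j x) ^ 2 = (∑ j, c j ^ 2) * ((m : ℝ)⁻¹ * ∫ x, Kfun x ^ 2) := by
  have hsq : ∀ x, (∑ j, c j * bump m j x) ^ 2 = ∑ j, c j ^ 2 * bump m j x ^ 2 := fun x => by
    rw [sq_sum_eq_sum_sq_of_mul_eq_zero]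
    · simp only [mul_pow]
    · intro j _ k _ hjk
      rw [mul_mul_mul_comm, bump_mul_bump_eq_zero hjk, mul_zero]
  simp_rw [hsq]
  rw [integral_finsetSum _ fun j _ => (integrable_bump_sq j).const_mul _, Finset.sum_mul]
  simp_rw [integral_const_mul, integral_bump_sq]

lemma smoothLbP_sub_smoothLbP {n rs m β i : ℕ} {Δ : ℕ → ℝ} (w w' : Fin m → Bool)
    (hi : n - rs + 1 ≤ i) (x : ℝ) :
    smoothLbP n rs m β Δ w i x - smoothLbP n rs m β Δ w' i x =
      ∑ j, ((if w j then (1 : ℝ) else 0) - (if w' j then 1 else 0)) *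
        ((Δ (n - rs + 1) - Δ i) / (m : ℝ) ^ β) * bump m j x := by
  rw [smoothLbP, smoothLbP, if_pos hi, if_pos hi, add_sub_add_left_eq_sub,
    ← Finset.sum_sub_distrib]
  simp only [bump, sub_mul]

theorem stmt19_general (β : ℕ) (n rs m : ℕ)
    (Δ : ℕ → ℝ)
    (hnonneg : ∀ i ∈ Finset.Icc 1 n, 0 ≤ Δ i)
    (hΔn : Δ n = 0)
    (hrs : rs ∈ Finset.Icc 1 n)
    (w w' : Fin m → Bool) :
    Real.sqrt (∫ x, (smoothLbP n rs m β Δ w n x - smoothLbP n rs m β Δ w' n x) ^ 2) =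
      Real.sqrt (hammingDist w w' : ℝ) * Real.sqrt (∫ x, (Kfun x) ^ 2) *
        Δ (n - rs + 1) / (m : ℝ) ^ ((β : ℝ) + 1 / 2) := by
  obtain ⟨hrs1, hrsn⟩ := Finset.mem_Icc.1 hrs
  have ha : 0 ≤ Δ (n - rs + 1) := hnonneg _ (Finset.mem_Icc.2 ⟨by omega, by omega⟩)
  have hI : 0 ≤ ∫ x, Kfun x ^ 2 := integral_nonneg fun x => sq_nonneg _
  have hL2sq : ∫ x, (smoothLbP n rs m β Δ w n x - smoothLbP n rs m β Δ w' n x) ^ 2 =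
      hammingDist w w' * (Δ (n - rs + 1) / (m : ℝ) ^ β) ^ 2 *
        ((m : ℝ)⁻¹ * ∫ x, Kfun x ^ 2) := by
    simp_rw [smoothLbP_sub_smoothLbP (n := n) (rs := rs) (β := β) (Δ := Δ) w w'
      (show n - rs + 1 ≤ n by omega), hΔn, sub_zero, integral_sq_sum_bump, mul_pow,
      ← Finset.sum_mul, sum_sq_boolIndicator_sub_eq_hammingDist]
  rw [hL2sq, Real.rpow_add' (Nat.cast_nonneg m) (by positivity), Real.rpow_natCast,
    ← Real.sqrt_eq_rpow, Real.sqrt_mul (by positivity), Real.sqrt_mul (by positivity),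
    Real.sqrt_mul (by positivity), Real.sqrt_sq (by positivity), Real.sqrt_inv]
  ring

/-- Proposition C.6. For the smooth lower-bound construction, the `L₂`
distance between the final densities equals
`√(h(w,w′))·‖K‖·Δ_{n−r*+1}/m^{β+1/2}`. -/
theorem stmt19 (β : ℕ) (hβ : 1 ≤ β) (n rs m : ℕ) (hn : 0 < n)
    (Δ : ℕ → ℝ)
    (hnonneg : ∀ i ∈ Finset.Icc 1 n, 0 ≤ Δ i)
    (hmono : ∀ i ∈ Finset.Icc 1 (n - 1), Δ (i + 1) ≤ Δ i)
    (hΔn : Δ n = 0)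
    (hrs : rs ∈ Finset.Icc 1 n)
    (hΔrs : Δ (n - rs + 1) ≤ ((1 : ℝ) / rs) ^ ((β : ℝ) / (2 * (β : ℝ) + 1)))
    (hm : 0 < m) (hmrs : m ^ (2 * β + 1) = rs)
    (w w' : Fin m → Bool) :
    Real.sqrt (∫ x, (smoothLbP n rs m β Δ w n x - smoothLbP n rs m β Δ w' n x) ^ 2) =
      Real.sqrt (hammingDist w w' : ℝ) * Real.sqrt (∫ x, (Kfun x) ^ 2) *
        Δ (n - rs + 1) / (m : ℝ) ^ ((β : ℝ) + 1 / 2) :=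
  stmt19_general β n rs m Δ hnonneg hΔn hrs w w'
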